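/- Let q̂ be the position operator on L²(ℝ), (q̂ψ)(t) = tψ(t), with domain {ψ ∈ L²(ℝ) : ∫ t²|ψ(t)|² dt < ∞}. Then q̂ is selfadjoint. -/

import Mathlib

/-!
Since `m` is real, the multiplication operator `T` is symmetric. For `y` in the domain of
`T†`, test the adjoint relation against the truncation `u = 1_{|m| ≤ n} (m y - T† y)`, which
lies in the domain of `T`: it gives `∫ |u|² = 0`, so `T† y = m y` almost everywhere, and in
particular `m y ∈ L²`, i.e. `y ∈ dom T`. The same test with `y = 0` shows that `dom T` has
trivial orthogonal complement, so `T†` is defined in the first place.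
-/

open MeasureTheory ComplexConjugate

variable {X : Type*} [MeasurableSpace X] {μ : Measure X} {m : X → ℝ}

theorem memLp_indicator_abs_le_mul (hm : Measurable m) {p : ENNReal} {f : X → ℂ}
    (hf : MemLp f p μ) (c : ℝ) :
    MemLp ({x | |m x| ≤ c}.indicator fun x => (m x : ℂ) * f x) p μ := by
  refine hf.of_le_mul (c := |c|) ?_ (.of_forall fun x => ?_)
  · exact ((Complex.measurable_ofReal.comp hm).aestronglyMeasurable.mul hf.1).indicator
      (measurableSet_le hm.abs measurable_const)
  · by_cases hx : |m x| ≤ c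
    · simp only [Set.indicator_of_mem (show x ∈ {x | |m x| ≤ c} from hx), norm_mul,
        Complex.norm_real, Real.norm_eq_abs]
      exact mul_le_mul_of_nonneg_right (hx.trans (le_abs_self c)) (norm_nonneg _)
    · simp [Set.indicator_of_notMem (show x ∉ {x | |m x| ≤ c} from hx)]
      positivity

theorem ae_eq_zero_of_integral_conj_mul_self {u : X → ℂ} (hu : MemLp u 2 μ)
    (h : ∫ x, conj (u x) * u x ∂μ = 0) : u =ᵐ[μ] 0 := by
  simp_rw [Complex.conj_mul', ← Complex.ofReal_pow, integral_complex_ofReal,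
    Complex.ofReal_eq_zero] at h
  rw [integral_eq_zero_iff_of_nonneg (fun x => by positivity)
    (hu.integrable_norm_pow two_ne_zero)] at h
  filter_upwards [h] with x hx
  simpa using hx

theorem ae_mul_eq_of_abs_le (hm : Measurable m) {y w : X → ℂ} (hy : MemLp y 2 μ)
    (hw : MemLp w 2 μ)
    (h : ∀ u : X → ℂ, MemLp u 2 μ → MemLp (fun x => (m x : ℂ) * u x) 2 μ →
      ∫ x, conj (w x) * u x ∂μ = ∫ x, conj (y x) * ((m x : ℂ) * u x) ∂μ) (c : ℝ) :
    ∀ᵐ x ∂μ, |m x| ≤ c → (m x : ℂ) * y x = w x := by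
  set S := {x | |m x| ≤ c}
  set v := S.indicator (fun x => (m x : ℂ) * y x) - w
  set u := S.indicator v
  have hv : MemLp v 2 μ := (memLp_indicator_abs_le_mul hm hy c).sub hw
  have hu : MemLp u 2 μ := hv.indicator (measurableSet_le hm.abs measurable_const)
  have hmu : MemLp (fun x => (m x : ℂ) * u x) 2 μ := by
    convert memLp_indicator_abs_le_mul hm hv c using 2 with x
    exact (S.indicator_mul_right (fun x => (m x : ℂ)) v).symm
  have hpointwise (x : X) :
      conj (u x) * u x = conj (y x) * ((m x : ℂ) * u x) - conj (w x) * u x := by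
    by_cases hx : x ∈ S
    · simp only [u, v, Set.indicator_of_mem hx, Pi.sub_apply, map_sub, map_mul,
        Complex.conj_ofReal]
      ring
    · simp [u, Set.indicator_of_notMem hx]
  have hu0 : ∫ x, conj (u x) * u x ∂μ = 0 := by
    simp_rw [hpointwise]
    have hyu : Integrable (fun x => conj (y x) * ((m x : ℂ) * u x)) μ :=
      hy.star.integrable_mul hmu
    have hwu : Integrable (fun x => conj (w x) * u x) μ := hw.star.integrable_mul hu
    rw [integral_sub hyu hwu, h u hu hmu, sub_self]
  filter_upwards [ae_eq_zero_of_integral_conj_mul_self hu hu0] with x hx hxS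
  simp only [u, v, Set.indicator_of_mem (show x ∈ S from hxS), Pi.sub_apply,
    Pi.zero_apply] at hx
  exact sub_eq_zero.1 hx

theorem mul_ae_eq_of_integral_eq (hm : Measurable m) {y w : X → ℂ} (hy : MemLp y 2 μ)
    (hw : MemLp w 2 μ)
    (h : ∀ u : X → ℂ, MemLp u 2 μ → MemLp (fun x => (m x : ℂ) * u x) 2 μ →
      ∫ x, conj (w x) * u x ∂μ = ∫ x, conj (y x) * ((m x : ℂ) * u x) ∂μ) :
    (fun x => (m x : ℂ) * y x) =ᵐ[μ] w := by
  filter_upwards [ae_all_iff.2 fun n : ℕ => ae_mul_eq_of_abs_le hm hy hw h n] with x hx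
  obtain ⟨n, hn⟩ := exists_nat_ge |m x|
  exact hx n hn

theorem L2.inner_eq_integral_conj_mul (f g : Lp ℂ 2 μ) :
    inner ℂ f g = ∫ x, conj (f x) * g x ∂μ := by
  simp [L2.inner_def, mul_comm]

structure IsMulOperator (m : X → ℝ) (T : Lp ℂ 2 μ →ₗ.[ℂ] Lp ℂ 2 μ) : Prop where
  mem_domain_iff (f : Lp ℂ 2 μ) : f ∈ T.domain ↔ MemLp (fun x => (m x : ℂ) * f x) 2 μ
  apply_ae_eq (f : T.domain) : (T f : X → ℂ) =ᵐ[μ] fun x => (m x : ℂ) * (f : Lp ℂ 2 μ) x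

namespace IsMulOperator

variable {T : Lp ℂ 2 μ →ₗ.[ℂ] Lp ℂ 2 μ}

theorem isFormalAdjoint_self (hT : IsMulOperator m T) : T.IsFormalAdjoint T := by
  intro f g
  simp only [L2.inner_eq_integral_conj_mul]
  refine integral_congr_ae ?_
  filter_upwards [hT.apply_ae_eq f, hT.apply_ae_eq g] with x hf hg
  rw [hf, hg, map_mul, Complex.conj_ofReal]
  ring

theorem integral_eq_of_inner_eq (hT : IsMulOperator m T) {a b : Lp ℂ 2 μ}
    (h : ∀ f : T.domain, inner ℂ a (f : Lp ℂ 2 μ) = inner ℂ b (T f)) (u : X → ℂ)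
    (hu : MemLp u 2 μ) (hmu : MemLp (fun x => (m x : ℂ) * u x) 2 μ) :
    ∫ x, conj (a x) * u x ∂μ = ∫ x, conj (b x) * ((m x : ℂ) * u x) ∂μ := by
  have hf : hu.toLp u ∈ T.domain := (hT.mem_domain_iff _).2 <| hmu.ae_eq <| by
    filter_upwards [hu.coeFn_toLp] with x hx
    rw [hx]
  have hab := h ⟨_, hf⟩
  rw [L2.inner_eq_integral_conj_mul, L2.inner_eq_integral_conj_mul] at hab
  calc ∫ x, conj (a x) * u x ∂μ = ∫ x, conj (a x) * hu.toLp u x ∂μ := by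
        refine integral_congr_ae ?_
        filter_upwards [hu.coeFn_toLp] with x hx
        rw [hx]
    _ = ∫ x, conj (b x) * T ⟨_, hf⟩ x ∂μ := hab
    _ = ∫ x, conj (b x) * ((m x : ℂ) * u x) ∂μ := by
        refine integral_congr_ae ?_
        filter_upwards [hT.apply_ae_eq ⟨_, hf⟩, hu.coeFn_toLp] with x hTx hx
        rw [hTx, ← hx]

theorem dense_domain (hT : IsMulOperator m T) (hm : Measurable m) :
    Dense (T.domain : Set (Lp ℂ 2 μ)) := by
  rw [Submodule.dense_iff_topologicalClosure_eq_top, Submodule.topologicalClosure_eq_top_iff,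
    Submodule.eq_bot_iff]
  intro y hy
  refine Lp.ext ?_
  have hzero := hT.integral_eq_of_inner_eq (a := y) (b := 0) fun f => by
    rw [inner_zero_left]
    exact (Submodule.mem_orthogonal' _ _).1 hy f f.2
  filter_upwards [mul_ae_eq_of_integral_eq hm (Lp.memLp 0) (Lp.memLp y) hzero,
    Lp.coeFn_zero ℂ 2 μ] with x hx h0
  rw [← hx, h0, Pi.zero_apply, mul_zero]

theorem isSelfAdjoint (hT : IsMulOperator m T) (hm : Measurable m) : IsSelfAdjoint T := by
  have hdense := hT.dense_domain hm
  have hadj (y : T.adjoint.domain) :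
      (fun x => (m x : ℂ) * (y : Lp ℂ 2 μ) x) =ᵐ[μ] T.adjoint y :=
    mul_ae_eq_of_integral_eq hm (Lp.memLp _) (Lp.memLp _)
      (hT.integral_eq_of_inner_eq (LinearPMap.adjoint_isFormalAdjoint hdense y))
  rw [LinearPMap.isSelfAdjoint_def]
  have hdomain : T.adjoint.domain = T.domain :=
    le_antisymm (fun y hy => (hT.mem_domain_iff y).2 ((Lp.memLp _).ae_eq (hadj ⟨y, hy⟩).symm))
      (hT.isFormalAdjoint_self.le_adjoint hdense).1
  refine LinearPMap.dExt hdomain fun y f hyf => Lp.ext ?_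
  filter_upwards [(hadj y).symm, hT.apply_ae_eq f] with x hy hf
  rw [hy, hf, hyf]

end IsMulOperator

/-- **The position operator is selfadjoint.**
`T` is the multiplication operator by the identity function on `L²(ℝ)`, i.e.
its domain is `{ψ ∈ L² : ∫ t²|ψ(t)|² dt < ∞}` (expressed as `t·ψ(t) ∈ L²`)
and `(Tψ)(t) = t ψ(t)` almost everywhere.  Then `T` is selfadjoint. -/
theorem position_operator_isSelfAdjoint
    (T : Lp ℂ 2 (volume : Measure ℝ) →ₗ.[ℂ] Lp ℂ 2 (volume : Measure ℝ))
    (hdom : ∀ f : Lp ℂ 2 (volume : Measure ℝ),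
      f ∈ T.domain ↔ MemLp (fun t : ℝ => (t : ℂ) * f t) 2 volume)
    (hact : ∀ f : T.domain,
      (T f : ℝ → ℂ) =ᵐ[volume]
        fun t : ℝ => (t : ℂ) * (f : Lp ℂ 2 (volume : Measure ℝ)) t) :
    IsSelfAdjoint T :=
  (IsMulOperator.mk (m := fun t => t) hdom hact).isSelfAdjoint measurable_id
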